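/- Let J be a tridiagonal matrix in M^+. Its eigenvalues α_1 > ... > α_n are real and simple, and the eigenvector v^k corresponding to α_k satisfies s^-(v^k) = s^+(v^k) = k - 1; in particular v^1 has no sign changes and v^n has entries of strictly alternating sign. -/

import Mathlib

open Matrix Polynomial

/-- Number of sign changes in a list of reals (adjacent pairs with negative product). -/
noncomputable def countSignChanges (l : List ℝ) : ℕ :=
  ((l.zip l.tail).filter (fun p => decide (p.1 * p.2 < 0))).length

/-- `s⁻(z)`: number of sign changes after deleting all zero entries. -/
noncomputable def sMinus {n : ℕ} (z : Fin n → ℝ) : ℕ :=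
  countSignChanges ((List.ofFn z).filter (fun x => decide (x ≠ 0)))

/-- `y` is obtained from `z` by replacing every zero entry by `+1` or `-1`. -/
def IsCompletion {n : ℕ} (z y : Fin n → ℝ) : Prop :=
  ∀ i, (z i ≠ 0 ∧ y i = z i) ∨ (z i = 0 ∧ (y i = 1 ∨ y i = -1))

/-- `s⁺(z)`: maximal number of sign changes over all completions of `z`. -/
noncomputable def sPlus {n : ℕ} (z : Fin n → ℝ) : ℕ :=
  sSup { m | ∃ y : Fin n → ℝ, IsCompletion z y ∧ m = countSignChanges (List.ofFn y) }

/-- All minors of `A` are nonnegative. -/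
def TotallyNonneg {n : ℕ} (A : Matrix (Fin n) (Fin n) ℝ) : Prop :=
  ∀ (k : ℕ) (r c : Fin k → Fin n), StrictMono r → StrictMono c →
    0 ≤ (A.submatrix r c).det

/-- All minors of `A` are positive. -/
def TotallyPos {n : ℕ} (A : Matrix (Fin n) (Fin n) ℝ) : Prop :=
  ∀ (k : ℕ) (r c : Fin k → Fin n), StrictMono r → StrictMono c →
    0 < (A.submatrix r c).det

/-- `A` is oscillatory: totally nonnegative and some positive power is totally positive. -/
def Oscillatory {n : ℕ} (A : Matrix (Fin n) (Fin n) ℝ) : Prop :=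
  TotallyNonneg A ∧ ∃ k : ℕ, 0 < k ∧ TotallyPos (A ^ k)

/-- Irreducibility of a matrix. -/
def MatIrreducible {n : ℕ} (A : Matrix (Fin n) (Fin n) ℝ) : Prop :=
  ∀ S : Set (Fin n), S.Nonempty → S ≠ Set.univ → ∃ i ∈ S, ∃ j ∈ Sᶜ, A i j ≠ 0

/-- `A ∈ M⁺`: tridiagonal with positive super- and sub-diagonal entries. -/
def MemMplus {n : ℕ} (A : Matrix (Fin n) (Fin n) ℝ) : Prop :=
  (∀ i j : Fin n, ((i : ℕ) + 1 < (j : ℕ) ∨ (j : ℕ) + 1 < (i : ℕ)) → A i j = 0) ∧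
  (∀ i j : Fin n, ((i : ℕ) + 1 = (j : ℕ) ∨ (j : ℕ) + 1 = (i : ℕ)) → 0 < A i j)

/-!
Write `b`, `a`, `c` for the diagonal, subdiagonal and superdiagonal of `J`, and let `χ m` be
given by `χ 0 = 1`, `χ 1 = X - b₀` and `χ (m + 2) = (X - b_{m+1}) χ (m + 1) - a_m c_m χ m`.
Since `a_m c_m > 0`, an induction with the intermediate value theorem shows that the roots of
`χ m` and `χ (m + 1)` are real, simple and strictly interlace. Solving `J v = λ v` row by row
gives `v_i c₀ ⋯ c_{i-1} = v₀ χ i (λ)`, so every root of `χ n` is an eigenvalue and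
`χ n = charpoly J`. For an eigenvalue `λ`, let `κ m` be the number of roots of `χ m` above `λ`.
Interlacing shows that `κ` grows by `0` or `1` at each step, that `χ m (λ)` has the sign
`(-1) ^ κ m` where it does not vanish, and that a zero of `m ↦ χ m (λ)` is flanked by values of
opposite signs. So the signs of `v` flip exactly where `κ` jumps, whichever way its zeros are
deleted or filled in, and `v` has `κ (n - 1) = κ n = k` sign changes.
-/

open scoped Finset

/-! ### Sign changes -/

theorem countSignChanges_cons_cons (a b : ℝ) (l : List ℝ) :
    countSignChanges (a :: b :: l) =
      (if a * b < 0 then 1 else 0) + countSignChanges (b :: l) := by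
  simp only [countSignChanges, List.tail_cons, List.zip_cons_cons, List.filter_cons]
  split_ifs <;> simp_all [add_comm]

theorem mul_pos_of_sign_eq {c a b : ℝ} (ha : 0 < c * a) (hb : 0 < c * b) : 0 < a * b := by
  have h := mul_pos ha hb
  rw [show c * a * (c * b) = c ^ 2 * (a * b) by ring] at h
  exact pos_of_mul_pos_right h (sq_nonneg c)

theorem mul_neg_of_sign_ne {c a b : ℝ} (ha : 0 < c * a) (hb : 0 < -c * b) : a * b < 0 := by
  have h := mul_pos ha hb
  rw [show c * a * (-c * b) = -(c ^ 2 * (a * b)) by ring, neg_pos] at h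
  exact neg_of_mul_neg_right h (sq_nonneg c)

theorem countSignChanges_filter_ne_zero_eq_of_forall₂ :
    ∀ {l l' : List ℝ}, List.Forall₂ (fun a b => (a ≠ 0 → b = a) ∧ b ≠ 0) l l' →
      l.head? ≠ some 0 → l.getLast? ≠ some 0 → (∀ a c, [a, 0, c] <:+: l → a * c < 0) →
      countSignChanges (l.filter (· ≠ 0)) = countSignChanges l'
  | [], [], .nil, _, _, _ => rfl
  | [a], [_], .cons _ .nil, _, _, _ => by by_cases a = 0 <;> simp_all [countSignChanges]
  | a :: b :: t, a' :: b' :: t', .cons haa' (.cons hbb' htt'), hhead, hlast, hflank => by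
    have ha : a ≠ 0 := by simpa using hhead
    obtain rfl : a = a' := (haa'.1 ha).symm
    by_cases hb : b = 0
    · subst hb
      match t, t', htt' with
      | [], [], _ => simp at hlast
      | c :: t, c' :: t', .cons hcc' htt' =>
        have hac : a * c < 0 := hflank a c ⟨[], t, rfl⟩
        have hc : c ≠ 0 := by rintro rfl; simp at hac
        obtain rfl : c = c' := (hcc'.1 hc).symm
        have ih := countSignChanges_filter_ne_zero_eq_of_forall₂ (.cons hcc' htt')
          (by simpa using hc) (by rwa [List.getLast?_cons_cons] at hlast)
          fun x z h => hflank x z (List.infix_cons (List.infix_cons h))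
        -- `a` and `c` have opposite signs, so `b'` makes exactly one sign change with them
        have hone : (if a * b' < 0 then 1 else 0) + (if b' * c < 0 then 1 else 0) = 1 := by
          have := hbb'.2
          split_ifs <;> nlinarith [mul_self_pos.mpr this]
        rw [countSignChanges_cons_cons, countSignChanges_cons_cons, ← ih, ← add_assoc, hone]
        simp [ha, hc, countSignChanges_cons_cons, hac]
    · obtain rfl : b = b' := (hbb'.1 hb).symm
      have ih := countSignChanges_filter_ne_zero_eq_of_forall₂ (.cons hbb' htt')
        (by simpa using hb) (by rwa [List.getLast?_cons_cons] at hlast)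
        fun x z h => hflank x z (List.infix_cons h)
      rw [countSignChanges_cons_cons, ← ih]
      simp [ha, hb, countSignChanges_cons_cons]

theorem exists_eq_of_infix_ofFn {N : ℕ} {x : Fin N → ℝ} {a b c : ℝ}
    (h : [a, b, c] <:+: List.ofFn x) : ∃ (i : ℕ) (hi : i + 2 < N),
      x ⟨i, by omega⟩ = a ∧ x ⟨i + 1, by omega⟩ = b ∧ x ⟨i + 2, hi⟩ = c := by
  obtain ⟨k, hk, hget⟩ := List.infix_iff_getElem?.mp h
  simp only [List.length_cons, List.length_nil, List.length_ofFn] at hk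
  refine ⟨k, by omega, ?_, ?_, ?_⟩
  · simpa [List.getElem?_ofFn, show k < N by omega] using hget 0 (by simp)
  · simpa [List.getElem?_ofFn, show k + 1 < N by omega, add_comm] using hget 1 (by simp)
  · simpa [List.getElem?_ofFn, show k + 2 < N by omega, add_comm] using hget 2 (by simp)

section FlankedZeros

variable {N : ℕ} {x : Fin (N + 1) → ℝ} (h0 : x 0 ≠ 0) (hlast : x (Fin.last N) ≠ 0)
  (hflank : ∀ (i : ℕ) (hi : i + 2 < N + 1), x ⟨i + 1, by omega⟩ = 0 →
    x ⟨i, by omega⟩ * x ⟨i + 2, hi⟩ < 0)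
include h0 hlast hflank

theorem sMinus_eq_countSignChanges_of_isCompletion {y : Fin (N + 1) → ℝ}
    (hy : IsCompletion x y) : sMinus x = countSignChanges (List.ofFn y) := by
  refine countSignChanges_filter_ne_zero_eq_of_forall₂ ?_ ?_ ?_ ?_
  · refine List.forall₂_iff_get.mpr ⟨by simp, fun i hi _ => ?_⟩
    simp only [List.get_eq_getElem, List.getElem_ofFn]
    rcases hy ⟨i, by simpa using hi⟩ with ⟨hne, heq⟩ | ⟨hz, h1 | h1⟩ <;> simp_all
  · simpa [List.ofFn_succ] using h0
  · rw [List.getLast?_eq_some_getLast (by simp), List.getLast_ofFn]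
    simpa [Fin.last] using hlast
  · intro a c h
    obtain ⟨i, hi, rfl, hzero, rfl⟩ := exists_eq_of_infix_ofFn h
    exact hflank i hi hzero

theorem sPlus_eq_sMinus : sPlus x = sMinus x := by
  have hcompl : IsCompletion x (fun i => if x i = 0 then 1 else x i) := fun i => by
    by_cases hi : x i = 0 <;> simp [hi]
  have : {m | ∃ y, IsCompletion x y ∧ m = countSignChanges (List.ofFn y)} = {sMinus x} := by
    ext m
    constructor
    · rintro ⟨y, hy, rfl⟩
      exact (sMinus_eq_countSignChanges_of_isCompletion h0 hlast hflank hy).symm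
    · rintro rfl
      exact ⟨_, hcompl, sMinus_eq_countSignChanges_of_isCompletion h0 hlast hflank hcompl⟩
  rw [sPlus, this, csSup_singleton]

end FlankedZeros

theorem countSignChanges_ofFn_add_of_sign {σ : ℝ} {κ : ℕ → ℕ} {N : ℕ}
    (hκ : ∀ i < N, κ i ≤ κ (i + 1) ∧ κ (i + 1) ≤ κ i + 1) {y : Fin (N + 1) → ℝ}
    (hy : ∀ i : Fin (N + 1), 0 < σ * (-1) ^ κ i * y i) :
    countSignChanges (List.ofFn y) + κ 0 = κ N := by
  induction N generalizing κ with
  | zero => simp [countSignChanges]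
  | succ N ih =>
    have hrest := ih (κ := fun i => κ (i + 1)) (y := fun i => y i.succ)
      (fun i hi => hκ (i + 1) (by omega)) (fun i => by simpa using hy i.succ)
    have hsplit : countSignChanges (List.ofFn y) =
        (if y 0 * y 1 < 0 then 1 else 0) + countSignChanges (List.ofFn fun i => y i.succ) := by
      rw [List.ofFn_succ, List.ofFn_succ (f := fun i => y i.succ), countSignChanges_cons_cons]
      rfl
    have h0 := hy 0
    have h1 := hy 1
    simp only [Fin.val_zero, Fin.val_one] at h0 h1
    have hstep : (if y 0 * y 1 < 0 then 1 else 0) + κ 0 = κ 1 := by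
      have := hκ 0 (by omega)
      rw [zero_add] at this
      rcases (show κ 1 = κ 0 ∨ κ 1 = κ 0 + 1 by omega) with h | h
      · rw [h] at h1
        rw [if_neg (mul_pos_of_sign_eq h0 h1).not_gt, h, zero_add]
      · rw [h, pow_succ, mul_neg_one, mul_neg] at h1
        rw [if_pos (mul_neg_of_sign_ne h0 h1), h, add_comm]
    simp only [zero_add] at hrest
    omega

/-- The sign behaviour of the values of a Sturm sequence at a root of its last member:
`κ i` counts the sign changes of `x` up to index `i`. -/
structure IsSturmSignPattern {N : ℕ} (x : Fin (N + 1) → ℝ) (κ : ℕ → ℕ) : Prop where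
  base : κ 0 = 0
  step : ∀ i < N, κ i ≤ κ (i + 1) ∧ κ (i + 1) ≤ κ i + 1
  sign : ∀ i, x i ≠ 0 → 0 < x 0 * (-1) ^ κ i * x i
  head_ne_zero : x 0 ≠ 0
  last_ne_zero : x (Fin.last N) ≠ 0
  flank : ∀ (i : ℕ) (hi : i + 2 < N + 1), x ⟨i + 1, by omega⟩ = 0 →
    x ⟨i, by omega⟩ * x ⟨i + 2, hi⟩ < 0

namespace IsSturmSignPattern

variable {N : ℕ} {x : Fin (N + 1) → ℝ} {κ : ℕ → ℕ}

theorem sMinus_eq (h : IsSturmSignPattern x κ) : sMinus x = κ N := by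
  set σ := Real.sign (x 0)
  have hσ : σ = -1 ∨ σ = 1 := Real.sign_apply_eq_of_ne_zero _ h.head_ne_zero
  set y : Fin (N + 1) → ℝ := fun i => if x i = 0 then σ * (-1) ^ κ i else x i
  have hy : IsCompletion x y := fun i => by
    by_cases hi : x i = 0
    · refine Or.inr ⟨hi, ?_⟩
      rcases neg_one_pow_eq_or ℝ (κ i) with h1 | h1 <;> rcases hσ with h2 | h2 <;>
        simp [y, hi, h1, h2]
    · exact Or.inl ⟨hi, by simp [y, hi]⟩
  have hsign : ∀ i : Fin (N + 1), 0 < x 0 * (-1) ^ κ i * y i := fun i => by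
    by_cases hi : x i = 0
    · have : x 0 * (-1) ^ κ i * y i = σ * x 0 * ((-1) ^ κ i) ^ 2 := by
        simp only [hi, ↓reduceIte, y]; ring
      rw [this, ← pow_mul, mul_comm (κ i), pow_mul, neg_one_sq, one_pow, mul_one]
      exact Real.sign_mul_pos_of_ne_zero _ h.head_ne_zero
    · simpa [y, hi] using h.sign i hi
  rw [sMinus_eq_countSignChanges_of_isCompletion h.head_ne_zero h.last_ne_zero h.flank hy,
    ← countSignChanges_ofFn_add_of_sign h.step hsign, h.base, add_zero]

theorem sPlus_eq (h : IsSturmSignPattern x κ) : sPlus x = κ N := by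
  rw [sPlus_eq_sMinus h.head_ne_zero h.last_ne_zero h.flank, h.sMinus_eq]

theorem le_and_le_add_sub (h : IsSturmSignPattern x κ) {i j : ℕ} (hij : i ≤ j) (hj : j ≤ N) :
    κ i ≤ κ j ∧ κ j ≤ κ i + (j - i) := by
  induction j, hij using Nat.le_induction with
  | base => simp
  | succ j hij ih =>
    have := h.step j (by omega)
    have := ih (by omega)
    omega

theorem ne_zero_of_neg_one_pow_eq (h : IsSturmSignPattern x κ)
    (hpar : ∀ i, i + 2 ≤ N → (-1 : ℝ) ^ κ (i + 2) = (-1) ^ κ i) (i : Fin (N + 1)) :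
    x i ≠ 0 := by
  obtain ⟨_ | j, hi⟩ := i
  · exact h.head_ne_zero
  · intro hzero
    rcases (show j + 1 = N ∨ j + 2 < N + 1 by omega) with hN | hN
    · exact h.last_ne_zero (by simpa [Fin.last, hN] using hzero)
    have hneg := h.flank j hN hzero
    have hj := h.sign _ (left_ne_zero_of_mul hneg.ne)
    have hj2 := h.sign _ (right_ne_zero_of_mul hneg.ne)
    rw [hpar j (by omega)] at hj2
    exact (mul_pos_of_sign_eq hj hj2).not_gt hneg

theorem pos_or_neg_of_eq_zero (h : IsSturmSignPattern x κ) (hN : κ N = 0) :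
    (∀ i, 0 < x i) ∨ (∀ i, x i < 0) := by
  have hκ : ∀ i : Fin (N + 1), κ i = 0 := fun i => by
    have := (h.le_and_le_add_sub (Nat.lt_succ_iff.mp i.isLt) le_rfl).1
    omega
  have hx : ∀ i, 0 < x 0 * x i := fun i => by
    simpa [hκ i] using h.sign i (h.ne_zero_of_neg_one_pow_eq (fun j hj => by
      rw [hκ ⟨j + 2, by omega⟩, hκ ⟨j, by omega⟩]) i)
  rcases h.head_ne_zero.lt_or_gt with h0 | h0
  · exact Or.inr fun i => neg_of_mul_pos_right (hx i) h0.le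
  · exact Or.inl fun i => pos_of_mul_pos_right (hx i) h0.le

theorem mul_succ_neg_of_eq (h : IsSturmSignPattern x κ) (hN : κ N = N) :
    ∀ (i : Fin (N + 1)) (hi : (i : ℕ) + 1 < N + 1), x i * x ⟨(i : ℕ) + 1, hi⟩ < 0 := by
  have hκ : ∀ i, i ≤ N → κ i = i := fun i hi => by
    have := h.le_and_le_add_sub (Nat.zero_le i) hi
    have := h.le_and_le_add_sub hi le_rfl
    have := h.base
    omega
  have hne := h.ne_zero_of_neg_one_pow_eq fun j hj => by
    rw [hκ _ hj, hκ _ (by omega), pow_succ, pow_succ]; ring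
  intro i hi
  have hi0 := h.sign i (hne i)
  have hi1 := h.sign _ (hne ⟨(i : ℕ) + 1, hi⟩)
  rw [hκ _ (by omega)] at hi0
  rw [hκ _ (by omega), pow_succ, mul_neg_one, mul_neg] at hi1
  exact mul_neg_of_sign_ne hi0 hi1

theorem of_eq_mul {y ρ : Fin (N + 1) → ℝ} {σ : ℝ} (h : IsSturmSignPattern x κ) (hσ : σ ≠ 0)
    (hρ : ∀ i, 0 < ρ i) (hy : ∀ i, y i = σ * ρ i * x i) : IsSturmSignPattern y κ := by
  have hne : ∀ i, y i ≠ 0 ↔ x i ≠ 0 := fun i => by simp [hy i, hσ, (hρ i).ne']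
  have hσ2 : 0 < σ ^ 2 := by positivity
  refine ⟨h.base, h.step, fun i hi => ?_, (hne 0).mpr h.head_ne_zero,
    (hne _).mpr h.last_ne_zero, fun i hi hzero => ?_⟩
  · have := h.sign i ((hne i).mp hi)
    have := hρ 0
    have := hρ i
    rw [hy, hy, show σ * ρ 0 * x 0 * (-1) ^ κ i * (σ * ρ i * x i) =
      σ ^ 2 * ρ 0 * ρ i * (x 0 * (-1) ^ κ i * x i) by ring]
    positivity
  · have hx := h.flank i hi (not_not.mp (mt (hne _).mpr (not_not.mpr hzero)))
    rw [hy, hy, show σ * ρ ⟨i, _⟩ * x ⟨i, _⟩ * (σ * ρ ⟨i + 2, hi⟩ * x ⟨i + 2, hi⟩) =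
      σ ^ 2 * ρ ⟨i, by omega⟩ * ρ ⟨i + 2, hi⟩ * (x ⟨i, by omega⟩ * x ⟨i + 2, hi⟩) by ring]
    exact mul_neg_of_pos_of_neg (mul_pos (mul_pos hσ2 (hρ _)) (hρ _)) hx

end IsSturmSignPattern

/-! ### Products of linear factors -/

theorem neg_one_pow_card_filter_neg_mul_prod_pos {ι : Type*} (s : Finset ι) (f : ι → ℝ)
    (hf : ∀ i ∈ s, f i ≠ 0) : 0 < (-1) ^ #{i ∈ s | f i < 0} * ∏ i ∈ s, f i := by
  rw [← Finset.prod_filter_mul_prod_filter_not s (fun i => f i < 0), ← mul_assoc,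
    ← Finset.prod_neg]
  refine mul_pos (Finset.prod_pos fun i hi => ?_) (Finset.prod_pos fun i hi => ?_)
  · exact neg_pos.mpr (Finset.mem_filter.mp hi).2
  · obtain ⟨hs, hi⟩ := Finset.mem_filter.mp hi
    exact lt_of_le_of_ne (not_lt.mp hi) (hf i hs).symm

theorem neg_one_pow_card_mul_eval_prod_pos {m : ℕ} (r : Fin m → ℝ) {x : ℝ} (hx : ∀ i, x ≠ r i) :
    0 < (-1) ^ #{i | x < r i} * (∏ i, (X - C (r i))).eval x := by
  simpa [eval_prod, sub_neg] using neg_one_pow_card_filter_neg_mul_prod_pos Finset.univ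
    (fun i => x - r i) fun i _ => sub_ne_zero.mpr (hx i)

section ProdXSubC

variable {ι R : Type*} [Fintype ι] [CommRing R]

theorem prod_X_sub_C_eq_multiset_prod (r : ι → R) :
    ∏ i, (X - C (r i)) = ((Finset.univ.val.map r).map fun a => X - C a).prod := by
  rw [Finset.prod_eq_multiset_prod, Multiset.map_map]
  rfl

variable [IsDomain R]

theorem roots_prod_X_sub_C_fintype (r : ι → R) :
    (∏ i, (X - C (r i))).roots = Finset.univ.val.map r := by
  rw [prod_X_sub_C_eq_multiset_prod, roots_multiset_prod_X_sub_C]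

theorem isRoot_prod_X_sub_C_iff {r : ι → R} {x : R} :
    (∏ i, (X - C (r i))).IsRoot x ↔ ∃ i, x = r i := by
  rw [← mem_roots (monic_prod_X_sub_C r Finset.univ).ne_zero, roots_prod_X_sub_C_fintype]
  simp [eq_comm]

theorem Polynomial.Monic.eq_prod_X_sub_C_of_injective {p : R[X]} (hp : p.Monic)
    (hdeg : p.natDegree = Fintype.card ι) {r : ι → R} (hr : Function.Injective r)
    (hroot : ∀ i, p.IsRoot (r i)) : p = ∏ i, (X - C (r i)) := by
  refine eq_of_monic_of_dvd_of_natDegree_le (monic_prod_X_sub_C r Finset.univ) hp ?_ ?_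
  · rw [prod_X_sub_C_eq_multiset_prod, Multiset.prod_X_sub_C_dvd_iff_le_roots hp.ne_zero,
      Multiset.le_iff_subset (Finset.univ.nodup.map hr)]
    intro a ha
    obtain ⟨i, -, rfl⟩ := Multiset.mem_map.mp ha
    exact (mem_roots hp.ne_zero).mpr (hroot i)
  · simp [hdeg]

end ProdXSubC

theorem countP_roots_prod_X_sub_C {m : ℕ} (r : Fin m → ℝ) (P : ℝ → Prop) [DecidablePred P] :
    (∏ i, (X - C (r i))).roots.countP P = #{i | P (r i)} := by
  rw [roots_prod_X_sub_C_fintype, Multiset.countP_map]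
  rfl

theorem Polynomial.Monic.exists_gt_eval_pos {p : ℝ[X]} (hp : p.Monic) (hdeg : 0 < p.natDegree)
    (a : ℝ) : ∃ t, a < t ∧ 0 < p.eval t := by
  have h := p.tendsto_atTop_of_leadingCoeff_nonneg (natDegree_pos_iff_degree_pos.mp hdeg)
    (by rw [hp.leadingCoeff]; exact zero_le_one)
  exact ((Filter.eventually_gt_atTop a).and (h.eventually_gt_atTop 0)).exists

theorem Polynomial.Monic.exists_lt_neg_one_pow_mul_eval_pos {p : ℝ[X]} (hp : p.Monic)
    (hdeg : 0 < p.natDegree) (a : ℝ) : ∃ t, t < a ∧ 0 < (-1) ^ p.natDegree * p.eval t := by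
  set q := C ((-1) ^ p.natDegree) * p.comp (-X)
  have hX : (-X : ℝ[X]).natDegree = 1 := by rw [natDegree_neg, natDegree_X]
  have hq : q.Monic := by
    rw [Monic, leadingCoeff_mul, leadingCoeff_C, leadingCoeff_comp (by rw [hX]; exact one_ne_zero),
      hp.leadingCoeff, leadingCoeff_neg, leadingCoeff_X, one_mul, ← mul_pow]
    norm_num
  have hqdeg : q.natDegree = p.natDegree := by
    rw [natDegree_C_mul (pow_ne_zero _ (neg_ne_zero.mpr one_ne_zero)), natDegree_comp, hX, mul_one]
  obtain ⟨t, ht, hpos⟩ := hq.exists_gt_eval_pos (hqdeg ▸ hdeg) (-a)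
  exact ⟨-t, by linarith, by simpa [q] using hpos⟩

theorem exists_mem_Ioo_isRoot_of_eval_mul_neg {f : ℝ[X]} {a b : ℝ} (hab : a < b)
    (h : f.eval a * f.eval b < 0) : ∃ x, a < x ∧ x < b ∧ f.IsRoot x := by
  have hc : ContinuousOn (fun x => f.eval x) (Set.Icc a b) := f.continuous.continuousOn
  rcases lt_or_gt_of_ne (left_ne_zero_of_mul h.ne) with ha | ha
  · obtain ⟨x, hx, hx0⟩ := intermediate_value_Ioo hab.le hc ⟨ha, by nlinarith⟩
    exact ⟨x, hx.1, hx.2, hx0⟩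
  · obtain ⟨x, hx, hx0⟩ := intermediate_value_Ioo' hab.le hc ⟨by nlinarith, ha⟩
    exact ⟨x, hx.1, hx.2, hx0⟩

/-! ### Interlacing roots -/

theorem card_filter_eq_of_iff_lt {m a : ℕ} {P : Fin m → Prop} [DecidablePred P] (ha : a ≤ m)
    (hP : ∀ j, P j ↔ (j : ℕ) < a) : #{j | P j} = a := by
  rw [Finset.filter_congr fun j _ => hP j, Fin.card_filter_val_lt, min_eq_right ha]

theorem StrictAnti.card_lt_eq {m : ℕ} {r : Fin m → ℝ} (hr : StrictAnti r) (i : Fin m) :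
    #{j | r i < r j} = i :=
  card_filter_eq_of_iff_lt i.is_le' fun _ => hr.lt_iff_gt.trans Fin.lt_def

def Interlaces {m : ℕ} (r : Fin m → ℝ) (s : Fin (m + 1) → ℝ) : Prop :=
  ∀ i : Fin m, s i.succ < r i ∧ r i < s i.castSucc

namespace Interlaces

variable {m : ℕ} {r : Fin m → ℝ} {s : Fin (m + 1) → ℝ}

theorem strictAnti_right (h : Interlaces r s) : StrictAnti s :=
  Fin.strictAnti_iff_succ_lt.mpr fun i => (h i).1.trans (h i).2

theorem strictAnti_left (h : Interlaces r s) : StrictAnti r := fun i j hij =>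
  calc r j < s j.castSucc := (h j).2
    _ ≤ s i.succ := h.strictAnti_right.antitone (Fin.le_def.mpr (by simpa using hij))
    _ < r i := (h i).1

theorem left_ne_right (h : Interlaces r s) (i : Fin m) (j : Fin (m + 1)) : r i ≠ s j := by
  rcases le_or_gt (j : ℕ) i with hj | hj
  · exact ((h i).2.trans_le (h.strictAnti_right.antitone (Fin.le_def.mpr hj))).ne
  · have : i.succ ≤ j := Fin.le_def.mpr hj
    exact ((h.strictAnti_right.antitone this).trans_lt (h i).1).ne'

theorem card_lt_left_eq (h : Interlaces r s) (i : Fin (m + 1)) : #{j | s i < r j} = i := by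
  refine card_filter_eq_of_iff_lt (Nat.lt_succ_iff.mp i.isLt) fun j => ⟨fun hj => ?_, fun hj => ?_⟩
  · by_contra hij
    exact (h.strictAnti_right.antitone (Fin.le_def.mpr (not_lt.mp hij))).not_gt
      ((h j).2.trans' hj)
  · have : j.succ ≤ i := Fin.le_def.mpr hj
    exact (h.strictAnti_right.antitone this).trans_lt (h j).1

theorem card_lt_left_le (h : Interlaces r s) (x : ℝ) : #{j | x < r j} ≤ #{j | x < s j} :=
  Finset.card_le_card_of_injOn Fin.castSucc
    (fun j hj => by simpa using (Finset.mem_filter.mp hj).2.trans (h j).2)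
    (Fin.castSucc_injective m).injOn

theorem card_lt_right_le (h : Interlaces r s) (x : ℝ) :
    #{j | x < s j} ≤ #{j | x < r j} + 1 :=
  calc #{j | x < s j} ≤ #(insert 0 (({j | x < r j} : Finset (Fin m)).image Fin.succ)) := by
        refine Finset.card_le_card fun j hj => ?_
        induction j using Fin.cases with
        | zero => simp
        | succ j => simpa using (Finset.mem_filter.mp hj).2.trans (h j).1
    _ ≤ #(({j | x < r j} : Finset (Fin m)).image Fin.succ) + 1 := Finset.card_insert_le _ _
    _ ≤ #{j | x < r j} + 1 := by gcongr; exact Finset.card_image_le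

end Interlaces

theorem exists_interlaces_isRoot_of_alternating {k : ℕ} {f : ℝ[X]} {e : Fin (k + 1) → ℝ}
    (he : StrictAnti e) (hsign : ∀ j : Fin (k + 1), 0 < (-1) ^ (j : ℕ) * f.eval (e j)) :
    ∃ s : Fin k → ℝ, Interlaces s e ∧ ∀ i, f.IsRoot (s i) := by
  have hroot : ∀ i : Fin k, ∃ x, e i.succ < x ∧ x < e i.castSucc ∧ f.IsRoot x := by
    intro i
    refine exists_mem_Ioo_isRoot_of_eval_mul_neg (he (Fin.castSucc_lt_succ (i := i))) ?_
    have hsucc := hsign i.succ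
    rw [Fin.val_succ, pow_succ, mul_neg_one] at hsucc
    rw [mul_comm]
    exact mul_neg_of_sign_ne (by simpa using hsign i.castSucc) hsucc
  choose s hs using hroot
  exact ⟨s, fun i => ⟨(hs i).1, (hs i).2.1⟩, fun i => (hs i).2.2⟩

theorem Polynomial.Monic.exists_interlaces_isRoot {f : ℝ[X]} (hf : f.Monic) {m : ℕ}
    (hdeg : f.natDegree = m + 2) {s : Fin (m + 1) → ℝ} (hs : StrictAnti s)
    (hsign : ∀ i : Fin (m + 1), 0 < (-1) ^ ((i : ℕ) + 1) * f.eval (s i)) :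
    ∃ u : Fin (m + 2) → ℝ, Interlaces s u ∧ ∀ i, f.IsRoot (u i) := by
  obtain ⟨T, hT, hfT⟩ := hf.exists_gt_eval_pos (by omega) (s 0)
  obtain ⟨t, ht, hft⟩ := hf.exists_lt_neg_one_pow_mul_eval_pos (by omega) (s (Fin.last m))
  set e : Fin (m + 3) → ℝ := Fin.cons T (Fin.snoc s t)
  have he_s : ∀ j : Fin (m + 1), e j.castSucc.succ = s j := fun j => by simp [e]
  have he : StrictAnti e := by
    refine Fin.strictAnti_iff_succ_lt.mpr fun i => ?_
    induction i using Fin.cases with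
    | zero => simpa [e] using hT
    | succ i =>
      rw [← Fin.succ_castSucc, he_s]
      induction i using Fin.lastCases with
      | last => simpa [e] using ht
      | cast i => rw [Fin.succ_castSucc, he_s]; exact hs Fin.castSucc_lt_succ
  have hsign_e : ∀ j : Fin (m + 3), 0 < (-1) ^ (j : ℕ) * f.eval (e j) := by
    intro j
    induction j using Fin.cases with
    | zero => simpa [e] using hfT
    | succ j =>
      induction j using Fin.lastCases with
      | last => simpa [e, hdeg] using hft
      | cast j => rw [he_s]; simpa using hsign j
  obtain ⟨u, hu, hroot⟩ := exists_interlaces_isRoot_of_alternating he hsign_e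
  refine ⟨u, fun j => ⟨?_, ?_⟩, hroot⟩
  · have := (hu j.succ).2
    rwa [← Fin.succ_castSucc, he_s] at this
  · have := (hu j.castSucc).1
    rwa [he_s] at this

theorem Interlaces.exists_interlaces_sub_mul {m : ℕ} {r : Fin m → ℝ} {s : Fin (m + 1) → ℝ}
    (h : Interlaces r s) (b : ℝ) {d : ℝ} (hd : 0 < d) :
    ∃ t : Fin (m + 2) → ℝ, Interlaces s t ∧
      (X - C b) * ∏ i, (X - C (s i)) - C d * ∏ i, (X - C (r i)) = ∏ i, (X - C (t i)) := by
  set p := ∏ i, (X - C (r i))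
  set q := ∏ i, (X - C (s i))
  set f := (X - C b) * q - C d * p
  have hlead : ((X - C b) * q).Monic := (monic_X_sub_C b).mul (monic_prod_X_sub_C s _)
  have hlead_deg : ((X - C b) * q).natDegree = m + 2 := by
    rw [(monic_X_sub_C b).natDegree_mul (monic_prod_X_sub_C s _), natDegree_X_sub_C,
      natDegree_finsetProd_X_sub_C_eq_card, Finset.card_univ, Fintype.card_fin]
    omega
  have hlow : (C d * p).natDegree < ((X - C b) * q).natDegree := by
    rw [natDegree_C_mul hd.ne', hlead_deg]
    simp [p]
  have hf : f.Monic := hlead.sub_of_left (degree_lt_degree hlow)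
  have hf_deg : f.natDegree = m + 2 := by
    rw [natDegree_sub_eq_left_of_natDegree_lt hlow, hlead_deg]
  -- at the roots of `q` the recurrence gives `f = -d p`, which alternates in sign
  have hsign : ∀ i : Fin (m + 1), 0 < (-1) ^ ((i : ℕ) + 1) * f.eval (s i) := by
    intro i
    have hq : q.eval (s i) = 0 := isRoot_prod_X_sub_C_iff.mpr ⟨i, rfl⟩
    have hp := neg_one_pow_card_mul_eval_prod_pos r (x := s i) fun j => (h.left_ne_right j i).symm
    rw [h.card_lt_left_eq i] at hp
    have : (-1) ^ ((i : ℕ) + 1) * f.eval (s i) = d * ((-1) ^ (i : ℕ) * p.eval (s i)) := by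
      simp only [f, eval_sub, eval_mul, hq, eval_C]; ring
    rw [this]
    exact mul_pos hd hp
  obtain ⟨u, hu, hroot⟩ := hf.exists_interlaces_isRoot hf_deg h.strictAnti_right hsign
  exact ⟨u, hu, hf.eq_prod_X_sub_C_of_injective (by simp [hf_deg]) hu.strictAnti_right.injective
    hroot⟩

/-! ### Three-term recurrences -/

noncomputable def threeTermPoly (b d : ℕ → ℝ) : ℕ → ℝ[X]
  | 0 => 1
  | 1 => X - C (b 0)
  | m + 2 => (X - C (b (m + 1))) * threeTermPoly b d (m + 1) - C (d m) * threeTermPoly b d m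

namespace threeTermPoly

variable {b d : ℕ → ℝ}

theorem exists_interlaces (hd : ∀ m, 0 < d m) : ∀ m, ∃ (r : Fin m → ℝ) (s : Fin (m + 1) → ℝ),
    Interlaces r s ∧ threeTermPoly b d m = ∏ i, (X - C (r i)) ∧
      threeTermPoly b d (m + 1) = ∏ i, (X - C (s i))
  | 0 => ⟨Fin.elim0, fun _ => b 0, fun i => i.elim0, by simp [threeTermPoly],
      by simp [threeTermPoly]⟩
  | m + 1 => by
    obtain ⟨r, s, h, hr, hs⟩ := exists_interlaces hd m
    obtain ⟨t, hst, ht⟩ := h.exists_interlaces_sub_mul (b (m + 1)) (hd m)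
    exact ⟨s, t, hst, hs, by rw [threeTermPoly, hs, hr, ht]⟩

variable (hd : ∀ m, 0 < d m) {x : ℝ}
include hd

theorem countP_roots_le_succ (m : ℕ) :
    (threeTermPoly b d m).roots.countP (x < ·) ≤
        (threeTermPoly b d (m + 1)).roots.countP (x < ·) ∧
      (threeTermPoly b d (m + 1)).roots.countP (x < ·) ≤
        (threeTermPoly b d m).roots.countP (x < ·) + 1 := by
  obtain ⟨r, s, h, hr, hs⟩ := exists_interlaces hd m
  rw [hr, hs, countP_roots_prod_X_sub_C, countP_roots_prod_X_sub_C]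
  exact ⟨h.card_lt_left_le x, h.card_lt_right_le x⟩

theorem neg_one_pow_countP_roots_mul_eval_pos {m : ℕ} (hx : ¬(threeTermPoly b d m).IsRoot x) :
    0 < (-1) ^ (threeTermPoly b d m).roots.countP (x < ·) * (threeTermPoly b d m).eval x := by
  obtain ⟨r, -, -, hr, -⟩ := exists_interlaces (b := b) hd m
  rw [hr] at hx ⊢
  rw [countP_roots_prod_X_sub_C]
  exact neg_one_pow_card_mul_eval_prod_pos r fun i hi => hx (isRoot_prod_X_sub_C_iff.mpr ⟨i, hi⟩)

theorem countP_roots_succ_eq {m : ℕ} (hx : (threeTermPoly b d (m + 1)).IsRoot x) :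
    (threeTermPoly b d (m + 1)).roots.countP (x < ·) =
      (threeTermPoly b d m).roots.countP (x < ·) := by
  obtain ⟨r, s, h, hr, hs⟩ := exists_interlaces hd m
  rw [hs] at hx ⊢
  obtain ⟨j, rfl⟩ := isRoot_prod_X_sub_C_iff.mp hx
  rw [hr, countP_roots_prod_X_sub_C, countP_roots_prod_X_sub_C, h.strictAnti_right.card_lt_eq,
    h.card_lt_left_eq]

theorem not_isRoot_of_isRoot_succ {m : ℕ} (hx : (threeTermPoly b d (m + 1)).IsRoot x) :
    ¬(threeTermPoly b d m).IsRoot x := by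
  obtain ⟨r, s, h, hr, hs⟩ := exists_interlaces hd m
  rw [hs] at hx
  rw [hr]
  intro hx'
  obtain ⟨j, rfl⟩ := isRoot_prod_X_sub_C_iff.mp hx
  obtain ⟨i, hi⟩ := isRoot_prod_X_sub_C_iff.mp hx'
  exact h.left_ne_right i j hi.symm

theorem isSturmSignPattern {N : ℕ} (hx : (threeTermPoly b d (N + 1)).IsRoot x) :
    IsSturmSignPattern (fun i : Fin (N + 1) => (threeTermPoly b d i).eval x)
      (fun m => (threeTermPoly b d m).roots.countP (x < ·)) where
  base := by simp [threeTermPoly]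
  step i _ := countP_roots_le_succ hd i
  sign i hi := by simpa [threeTermPoly] using neg_one_pow_countP_roots_mul_eval_pos hd hi
  head_ne_zero := by simp [threeTermPoly]
  last_ne_zero := not_isRoot_of_isRoot_succ hd hx
  flank i hi hzero := by
    have hrec : (threeTermPoly b d (i + 2)).eval x = -(d i * (threeTermPoly b d i).eval x) := by
      simp only [threeTermPoly, eval_sub, eval_mul, eval_C]
      rw [show (threeTermPoly b d (i + 1)).eval x = 0 from hzero]
      ring
    have hne : (threeTermPoly b d i).eval x ≠ 0 := not_isRoot_of_isRoot_succ hd hzero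
    simp only
    rw [hrec, mul_neg, neg_lt_zero, ← mul_assoc, mul_comm _ (d i), mul_assoc]
    exact mul_pos (hd i) (mul_self_pos.mpr hne)

end threeTermPoly

def jacobiApply (a b c u : ℕ → ℝ) : ℕ → ℝ
  | 0 => b 0 * u 0 + c 0 * u 1
  | m + 1 => a m * u m + b (m + 1) * u (m + 1) + c (m + 1) * u (m + 2)

section JacobiApply

variable {a b c : ℕ → ℝ} {x : ℝ}

theorem jacobiApply_congr {u u' : ℕ → ℝ} {i : ℕ} (h : ∀ j ≤ i + 1, u j = u' j) :
    jacobiApply a b c u i = jacobiApply a b c u' i := by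
  rcases i with _ | m
  · simp only [jacobiApply, h 0 (by omega), h 1 (by omega)]
  · simp only [jacobiApply, h m (by omega), h (m + 1) (by omega), h (m + 2) (by omega)]

theorem mul_prod_eq_eval_threeTermPoly_of_jacobiApply_eq {u : ℕ → ℝ} {M : ℕ}
    (hu : ∀ i < M, jacobiApply a b c u i = x * u i) :
    ∀ i ≤ M, u i * ∏ j ∈ Finset.range i, c j =
      u 0 * (threeTermPoly b (fun j => a j * c j) i).eval x := by
  have key : ∀ m, m + 1 ≤ M →
      u m * ∏ j ∈ Finset.range m, c j = u 0 * (threeTermPoly b (fun j => a j * c j) m).eval x ∧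
      u (m + 1) * ∏ j ∈ Finset.range (m + 1), c j =
        u 0 * (threeTermPoly b (fun j => a j * c j) (m + 1)).eval x := by
    intro m
    induction m with
    | zero =>
      intro hM
      have h0 := hu 0 (by omega)
      simp only [jacobiApply] at h0
      refine ⟨by simp [threeTermPoly], ?_⟩
      simp only [zero_add, Finset.prod_range_one, threeTermPoly, eval_sub, eval_X, eval_C]
      linarith
    | succ m ih =>
      intro hM
      obtain ⟨ih0, ih1⟩ := ih (by omega)
      refine ⟨ih1, ?_⟩
      have hrow := hu (m + 1) (by omega)
      simp only [jacobiApply] at hrow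
      rw [Finset.prod_range_succ] at ih1
      rw [Finset.prod_range_succ, Finset.prod_range_succ]
      simp only [threeTermPoly, eval_sub, eval_mul, eval_X, eval_C]
      linear_combination ((∏ j ∈ Finset.range m, c j) * c m) * hrow + (x - b (m + 1)) * ih1 -
        a m * c m * ih0
  intro i hi
  rcases i with _ | i
  · simp [threeTermPoly]
  · exact (key i hi).2

theorem jacobiApply_eval_threeTermPoly_div_prod (hc : ∀ i, c i ≠ 0) (i : ℕ) :
    jacobiApply a b c (fun i => (threeTermPoly b (fun j => a j * c j) i).eval x /
        ∏ j ∈ Finset.range i, c j) i =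
      x * ((threeTermPoly b (fun j => a j * c j) i).eval x / ∏ j ∈ Finset.range i, c j) := by
  rcases i with _ | m
  · have := hc 0
    simp only [jacobiApply, threeTermPoly, Finset.range_zero, Finset.prod_empty,
      Finset.prod_range_one, eval_one, eval_sub, eval_X, eval_C]
    field_simp
    ring
  · have := Finset.prod_ne_zero_iff.mpr fun j (_ : j ∈ Finset.range m) => hc j
    have := hc m
    have := hc (m + 1)
    simp only [jacobiApply, Finset.prod_range_succ, threeTermPoly, eval_sub, eval_mul, eval_X,
      eval_C]
    field_simp
    ring

end JacobiApply

/-! ### Tridiagonal matrices -/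

def zeroExtend {n : ℕ} (v : Fin n → ℝ) (i : ℕ) : ℝ := if h : i < n then v ⟨i, h⟩ else 0

theorem dotProduct_eq_sum_range_zeroExtend {n K : ℕ} (u v : Fin n → ℝ)
    (hu : ∀ j : Fin n, K ≤ j → u j = 0) :
    u ⬝ᵥ v = ∑ j ∈ Finset.range K, zeroExtend u j * zeroExtend v j := by
  have hvan : ∀ j, K ≤ j ∨ n ≤ j → zeroExtend u j * zeroExtend v j = 0 := by
    intro j hj
    by_cases h : j < n
    · rw [zeroExtend, dif_pos h, hu ⟨j, h⟩ (by simp only; omega), zero_mul]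
    · simp [zeroExtend, h]
  calc u ⬝ᵥ v = ∑ j ∈ Finset.range n, zeroExtend u j * zeroExtend v j := by
        rw [← Fin.sum_univ_eq_sum_range]; simp [dotProduct, zeroExtend]
    _ = ∑ j ∈ Finset.range (max n K), zeroExtend u j * zeroExtend v j :=
        Finset.sum_subset (Finset.range_mono (le_max_left _ _))
          fun j _ hj => hvan j (Or.inr (by simpa using hj))
    _ = ∑ j ∈ Finset.range K, zeroExtend u j * zeroExtend v j :=
        (Finset.sum_subset (Finset.range_mono (le_max_right _ _))
          fun j _ hj => hvan j (Or.inl (by simpa using hj))).symm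

theorem Matrix.isRoot_charpoly_of_mulVec_eq_smul {ι K : Type*} [Fintype ι] [DecidableEq ι]
    [CommRing K] [IsDomain K] {M : Matrix ι ι K} {v : ι → K} (hv : v ≠ 0) {x : K}
    (h : M *ᵥ v = x • v) : M.charpoly.IsRoot x := by
  rw [IsRoot, Matrix.eval_charpoly, ← Matrix.exists_mulVec_eq_zero_iff]
  refine ⟨v, hv, ?_⟩
  ext i
  simp [Matrix.sub_mulVec, h]

namespace Matrix

variable {n : ℕ} (J : Matrix (Fin n) (Fin n) ℝ)

def diagSeq (i : ℕ) : ℝ := zeroExtend (fun i => J i i) i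

/-- Off-diagonal entries are extended by `1`, so that they stay positive beyond the matrix. -/
def superdiagSeq (i : ℕ) : ℝ := if h : i + 1 < n then J ⟨i, by omega⟩ ⟨i + 1, h⟩ else 1

def subdiagSeq (i : ℕ) : ℝ := if h : i + 1 < n then J ⟨i + 1, h⟩ ⟨i, by omega⟩ else 1

/-- The characteristic polynomials of the leading principal blocks of `J`, through their
three-term recurrence. -/
noncomputable abbrev leadingCharpoly : ℕ → ℝ[X] :=
  threeTermPoly J.diagSeq fun j => J.subdiagSeq j * J.superdiagSeq j

variable {J}

theorem mulVec_apply_eq_jacobiApply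
    (hJ : ∀ i j : Fin n, ((i : ℕ) + 1 < (j : ℕ) ∨ (j : ℕ) + 1 < (i : ℕ)) → J i j = 0)
    (v : Fin n → ℝ) (i : ℕ) (hi : i < n) :
    (J *ᵥ v) ⟨i, hi⟩ = jacobiApply J.subdiagSeq J.diagSeq J.superdiagSeq (zeroExtend v) i := by
  have hdiag : zeroExtend (J ⟨i, hi⟩) i = J.diagSeq i := by simp [zeroExtend, diagSeq, hi]
  have hsuper : zeroExtend (J ⟨i, hi⟩) (i + 1) * zeroExtend v (i + 1) =
      J.superdiagSeq i * zeroExtend v (i + 1) := by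
    by_cases h : i + 1 < n <;> simp [zeroExtend, superdiagSeq, h]
  rw [mulVec, dotProduct_eq_sum_range_zeroExtend (K := i + 2) _ _
    fun j hj => hJ _ _ (Or.inl (by simp only; omega))]
  rcases i with _ | m
  · simp only [Finset.sum_range_succ, Finset.sum_range_zero, zero_add, jacobiApply, hdiag,
      hsuper]
  · have hsub : zeroExtend (J ⟨m + 1, hi⟩) m = J.subdiagSeq m := by
      simp [zeroExtend, subdiagSeq, hi, show m < n by omega]
    have hfar : ∑ j ∈ Finset.range m, zeroExtend (J ⟨m + 1, hi⟩) j * zeroExtend v j = 0 :=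
      Finset.sum_eq_zero fun j hj => by
        have hj : j < m := Finset.mem_range.mp hj
        simp [zeroExtend, show j < n by omega,
          hJ ⟨m + 1, hi⟩ ⟨j, by omega⟩ (Or.inr (by simp only; omega))]
    simp only [Finset.sum_range_succ, hfar, zero_add, jacobiApply, hdiag, hsub, hsuper]

end Matrix

namespace MemMplus

variable {n : ℕ} {J : Matrix (Fin n) (Fin n) ℝ}

theorem superdiagSeq_pos (hJ : MemMplus J) (i : ℕ) : 0 < J.superdiagSeq i := by
  unfold Matrix.superdiagSeq
  split_ifs
  exacts [hJ.2 _ _ (Or.inl rfl), one_pos]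

theorem subdiagSeq_mul_superdiagSeq_pos (hJ : MemMplus J) (i : ℕ) :
    0 < J.subdiagSeq i * J.superdiagSeq i := by
  refine mul_pos ?_ (hJ.superdiagSeq_pos i)
  unfold Matrix.subdiagSeq
  split_ifs
  exacts [hJ.2 _ _ (Or.inr rfl), one_pos]

theorem zeroExtend_mul_prod_eq_eval (hJ : MemMplus J) {v : Fin n → ℝ} {x : ℝ}
    (h : J *ᵥ v = x • v) : ∀ i ≤ n, zeroExtend v i * ∏ j ∈ Finset.range i, J.superdiagSeq j =
      zeroExtend v 0 * (J.leadingCharpoly i).eval x :=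
  mul_prod_eq_eval_threeTermPoly_of_jacobiApply_eq fun i hi => by
    rw [← Matrix.mulVec_apply_eq_jacobiApply hJ.1 v i hi, h]
    simp [zeroExtend, hi]

theorem charpoly_eq (hJ : MemMplus J) : J.charpoly = J.leadingCharpoly n := by
  obtain ⟨r, s, h, hr, -⟩ := threeTermPoly.exists_interlaces (b := J.diagSeq)
    hJ.subdiagSeq_mul_superdiagSeq_pos n
  rw [Matrix.leadingCharpoly, hr]
  refine J.charpoly_monic.eq_prod_X_sub_C_of_injective (by simp [Matrix.charpoly_natDegree_eq_dim])
    h.strictAnti_left.injective fun i => ?_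
  -- the values of the three-term sequence at a root, divided by `c₀ ⋯ c_{k-1}`, solve every row
  set W : ℕ → ℝ := fun k => (J.leadingCharpoly k).eval (r i) /
    ∏ j ∈ Finset.range k, J.superdiagSeq j
  have hW : ∀ k ≤ n, zeroExtend (fun k : Fin n => W k) k = W k := by
    intro k hk
    rcases hk.lt_or_eq with hk | rfl
    · simp [zeroExtend, hk]
    · have : (J.leadingCharpoly k).eval (r i) = 0 := by
        rw [Matrix.leadingCharpoly, hr]
        exact isRoot_prod_X_sub_C_iff.mpr ⟨i, rfl⟩
      simp [zeroExtend, W, this]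
  refine Matrix.isRoot_charpoly_of_mulVec_eq_smul (v := fun k : Fin n => W k) ?_ ?_
  · intro h0
    simpa [W, threeTermPoly] using congrFun h0 ⟨0, i.pos⟩
  · ext ⟨k, hk⟩
    rw [Matrix.mulVec_apply_eq_jacobiApply hJ.1 _ k hk,
      jacobiApply_congr fun j hj => hW j (by omega),
      jacobiApply_eval_threeTermPoly_div_prod fun j => (hJ.superdiagSeq_pos j).ne']
    rfl

theorem exists_strictAnti_charpoly_eq_prod (hJ : MemMplus J) :
    ∃ α : Fin n → ℝ, StrictAnti α ∧ J.charpoly = ∏ i, (X - C (α i)) := by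
  obtain ⟨r, s, h, hr, -⟩ := threeTermPoly.exists_interlaces (b := J.diagSeq)
    hJ.subdiagSeq_mul_superdiagSeq_pos n
  exact ⟨r, h.strictAnti_left, by rw [hJ.charpoly_eq, Matrix.leadingCharpoly, hr]⟩

end MemMplus

namespace MemMplus

variable {N : ℕ} {J : Matrix (Fin (N + 1)) (Fin (N + 1)) ℝ}

theorem isSturmSignPattern (hJ : MemMplus J) {v : Fin (N + 1) → ℝ} (hv : v ≠ 0) {x : ℝ}
    (h : J *ᵥ v = x • v) :
    IsSturmSignPattern v fun m => (J.leadingCharpoly m).roots.countP (x < ·) := by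
  have hroot : (J.leadingCharpoly (N + 1)).IsRoot x :=
    hJ.charpoly_eq ▸ Matrix.isRoot_charpoly_of_mulVec_eq_smul hv h
  have hP : ∀ i, 0 < ∏ j ∈ Finset.range i, J.superdiagSeq j :=
    fun i => Finset.prod_pos fun j _ => hJ.superdiagSeq_pos j
  have hv_eq : ∀ i : Fin (N + 1), v i * ∏ j ∈ Finset.range i, J.superdiagSeq j =
      v 0 * (J.leadingCharpoly i).eval x := fun i => by
    have := hJ.zeroExtend_mul_prod_eq_eval h i i.isLt.le
    simpa only [zeroExtend, dif_pos i.isLt, dif_pos N.succ_pos, Fin.eta, Fin.zero_eta] using this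
  have hv0 : v 0 ≠ 0 := fun h0 => hv <| funext fun i => by
    simpa [h0, (hP i).ne'] using hv_eq i
  refine (threeTermPoly.isSturmSignPattern hJ.subdiagSeq_mul_superdiagSeq_pos hroot).of_eq_mul
    hv0 (fun i => inv_pos.mpr (hP i)) fun i => ?_
  rw [mul_right_comm, ← hv_eq i, mul_inv_cancel_right₀ (hP i).ne']

theorem countP_roots_leadingCharpoly_eq (hJ : MemMplus J) {α : Fin (N + 1) → ℝ}
    (hα : StrictAnti α) (hchar : J.charpoly = ∏ i, (X - C (α i))) (k : Fin (N + 1)) :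
    (J.leadingCharpoly N).roots.countP (α k < ·) = k := by
  have hroot : (J.leadingCharpoly (N + 1)).IsRoot (α k) := by
    rw [← hJ.charpoly_eq, hchar]
    exact isRoot_prod_X_sub_C_iff.mpr ⟨k, rfl⟩
  calc (J.leadingCharpoly N).roots.countP (α k < ·)
      _ = (J.leadingCharpoly (N + 1)).roots.countP (α k < ·) :=
        (threeTermPoly.countP_roots_succ_eq hJ.subdiagSeq_mul_superdiagSeq_pos hroot).symm
      _ = #{i | α k < α i} := by rw [← hJ.charpoly_eq, hchar, countP_roots_prod_X_sub_C]
      _ = k := hα.card_lt_eq k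

end MemMplus

theorem stmt12 {n : ℕ} (J : Matrix (Fin n) (Fin n) ℝ) (hJ : MemMplus J) :
    (∃ α : Fin n → ℝ, StrictAnti α ∧
      J.charpoly = ∏ i : Fin n, (X - C (α i))) ∧
    (∀ (α : Fin n → ℝ) (v : Fin n → ℝ) (k : Fin n),
      StrictAnti α → J.charpoly = ∏ i : Fin n, (X - C (α i)) →
      v ≠ 0 → J.mulVec v = α k • v →
      (sMinus v = (k : ℕ) ∧ sPlus v = (k : ℕ)) ∧
      ((k : ℕ) = 0 → (∀ i, 0 < v i) ∨ (∀ i, v i < 0)) ∧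
      ((k : ℕ) = n - 1 →
        ∀ i : Fin n, ∀ hi : (i : ℕ) + 1 < n, v i * v ⟨(i : ℕ) + 1, hi⟩ < 0)) := by
  refine ⟨hJ.exists_strictAnti_charpoly_eq_prod, fun α v k hα hchar hv heig => ?_⟩
  obtain ⟨N, rfl⟩ : ∃ N, n = N + 1 := ⟨n - 1, by have := k.pos; omega⟩
  have hS := hJ.isSturmSignPattern hv heig
  have hκ := hJ.countP_roots_leadingCharpoly_eq hα hchar k
  exact ⟨⟨hS.sMinus_eq.trans hκ, hS.sPlus_eq.trans hκ⟩,
    fun hk => hS.pos_or_neg_of_eq_zero (hκ.trans hk),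
    fun hk => hS.mul_succ_neg_of_eq (hκ.trans (by omega))⟩
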